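/- arXiv:1711.01673 — 6 statements merged into one kernel-verified Lean document; each statement's English description precedes it below -/
import Mathlib

section
/- Every distributive module over a local ring is uniserial, i.e. if R is a local ring and M is an R-module whose lattice of submodules is distributive, then the submodules of M are totally ordered by inclusion. -/
/-!
Distributivity applied to `R(x + y) ⊓ (Rx ⊔ Ry)` writes `x + y = a(x + y) + v` with
`a(x + y) ∈ Rx` and `v ∈ Ry`; hence `a y ∈ Rx` and `(1 - a) x ∈ Ry`. In a local ring `a` or
`1 - a` is a unit, so `y ∈ Rx` or `x ∈ Ry`. Cyclic submodules being totally ordered, so are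
all submodules.
-/

namespace Submodule

section Ring

variable {R M : Type*} [Ring R] [AddCommGroup M] [Module R M]

theorem exists_smul_mem_span_and_one_sub_smul_mem_span
    (hdistrib : ∀ A B C : Submodule R M, A ⊓ (B ⊔ C) = (A ⊓ B) ⊔ (A ⊓ C)) (x y : M) :
    ∃ a : R, a • y ∈ R ∙ x ∧ (1 - a) • x ∈ R ∙ y := by
  have hxy : x + y ∈ (R ∙ (x + y)) ⊓ ((R ∙ x) ⊔ (R ∙ y)) :=
    ⟨mem_span_singleton_self _,
      add_mem_sup (mem_span_singleton_self x) (mem_span_singleton_self y)⟩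
  rw [hdistrib] at hxy
  obtain ⟨u, ⟨hu, hux⟩, v, ⟨-, hvy⟩, huv⟩ := mem_sup.mp hxy
  obtain ⟨a, rfl⟩ := mem_span_singleton.mp hu
  refine ⟨a, ?_, ?_⟩
  · have hay : a • y = a • (x + y) - a • x := by rw [smul_add]; abel
    rw [hay]
    exact sub_mem hux (smul_mem _ a (mem_span_singleton_self x))
  · have hv : v = (1 - a) • x + (1 - a) • y := by
      rw [← smul_add, sub_smul, one_smul]
      exact (sub_eq_of_eq_add' huv.symm).symm
    rw [eq_sub_of_add_eq hv.symm]
    exact sub_mem hvy (smul_mem _ (1 - a) (mem_span_singleton_self y))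

theorem mem_span_singleton_or_mem_span_singleton_of_smul_mem [IsLocalRing R]
    {a : R} {x y : M} (hy : a • y ∈ R ∙ x) (hx : (1 - a) • x ∈ R ∙ y) :
    x ∈ R ∙ y ∨ y ∈ R ∙ x :=
  (IsLocalRing.isUnit_or_isUnit_of_add_one (add_sub_cancel a 1)).symm.imp
    (fun h ↦ (smul_mem_iff_of_isUnit _ h).mp hx) (fun h ↦ (smul_mem_iff_of_isUnit _ h).mp hy)

end Ring

theorem le_total_of_forall_mem_span_singleton {R M : Type*} [Semiring R]
    [AddCommMonoid M] [Module R M] (h : ∀ x y : M, x ∈ R ∙ y ∨ y ∈ R ∙ x)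
    (A B : Submodule R M) : A ≤ B ∨ B ≤ A := by
  refine or_iff_not_imp_left.mpr fun hAB y hyB ↦ ?_
  obtain ⟨x, hxA, hxB⟩ := SetLike.not_le_iff_exists.mp hAB
  have hyx : y ∈ R ∙ x :=
    (h x y).resolve_left fun hxy ↦ hxB ((span_singleton_le_iff_mem y B).mpr hyB hxy)
  exact (span_singleton_le_iff_mem x A).mpr hxA hyx

end Submodule

/-- A module is *distributive* if its lattice of submodules satisfies
`A ⊓ (B ⊔ C) = (A ⊓ B) ⊔ (A ⊓ C)`. Every distributive module over a local ring
is uniserial: its submodules are totally ordered by inclusion. -/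
theorem distributive_module_over_local_ring_is_uniserial
    {R M : Type*} [Ring R] [IsLocalRing R] [AddCommGroup M] [Module R M]
    (hdistrib : ∀ A B C : Submodule R M, A ⊓ (B ⊔ C) = (A ⊓ B) ⊔ (A ⊓ C)) :
    ∀ A B : Submodule R M, A ≤ B ∨ B ≤ A :=
  Submodule.le_total_of_forall_mem_span_singleton fun x y ↦
    let ⟨_, hy, hx⟩ := Submodule.exists_smul_mem_span_and_one_sub_smul_mem_span hdistrib x y
    Submodule.mem_span_singleton_or_mem_span_singleton_of_smul_mem hy hx
end

section
/- Let R be a uniserial domain and let I be a two-sided ideal of R. Then the set P = {b ∈ R | bI ⊊ I} is a completely prime two-sided ideal of R. -/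
/-!
Since `I` is a left ideal, `bI ⊆ I` for every `b`, so `b` fails to shrink `I` exactly when
`I ⊆ bI`. Because `(ab)I = a(bI)`, the non-shrinkers are closed under multiplication, which is
complete primeness; the same identity gives absorption on the right, and on the left after
cancelling a nonzero factor in the domain. For closure under addition, the right ideals `aI`
and `bI` are comparable, and `(a + b)I` lies in the larger of the two.
-/

/-- A subset of a ring is a right ideal if it contains `0`, is closed under
addition, and absorbs multiplication by ring elements on the right. -/
def IsRightIdeal {R : Type*} [Ring R] (S : Set R) : Prop :=
  (0 : R) ∈ S ∧ (∀ a ∈ S, ∀ b ∈ S, a + b ∈ S) ∧ (∀ a ∈ S, ∀ r : R, a * r ∈ S)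

/-- A subset of a ring is a left ideal if it contains `0`, is closed under
addition, and absorbs multiplication by ring elements on the left. -/
def IsLeftIdeal {R : Type*} [Ring R] (S : Set R) : Prop :=
  (0 : R) ∈ S ∧ (∀ a ∈ S, ∀ b ∈ S, a + b ∈ S) ∧ (∀ a ∈ S, ∀ r : R, r * a ∈ S)

/-- A ring is uniserial if its right ideals are totally ordered by inclusion
and its left ideals are totally ordered by inclusion. -/
def IsUniserialRing (R : Type*) [Ring R] : Prop :=
  (∀ S T : Set R, IsRightIdeal S → IsRightIdeal T → S ⊆ T ∨ T ⊆ S) ∧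
  (∀ S T : Set R, IsLeftIdeal S → IsLeftIdeal T → S ⊆ T ∨ T ⊆ S)

section Shrinkers

variable {R : Type*} [Ring R]

-- Unlike Mathlib's `b • S`, this unfolds to the sets in the statement of the theorem.
def mulImage (b : R) (S : Set R) : Set R := {x | ∃ s ∈ S, x = b * s}

def shrinkers (I : Set R) : Set R := {b | mulImage b I ⊂ I}

theorem mulImage_one (S : Set R) : mulImage 1 S = S := by
  ext x
  simp [mulImage]

theorem mulImage_mul (a b : R) (S : Set R) :
    mulImage (a * b) S = mulImage a (mulImage b S) := by
  ext x
  simp [mulImage, mul_assoc]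

theorem mulImage_mono (a : R) {S T : Set R} (h : S ⊆ T) : mulImage a S ⊆ mulImage a T := by
  rintro x ⟨s, hs, rfl⟩
  exact ⟨s, h hs, rfl⟩

theorem mulImage_zero_subset (S : Set R) : mulImage 0 S ⊆ {0} := by
  rintro x ⟨s, -, rfl⟩
  simp

theorem mem_of_mul_mem_mulImage [IsLeftCancelMulZero R] {r x : R} {S : Set R} (hr : r ≠ 0)
    (h : r * x ∈ mulImage r S) : x ∈ S := by
  obtain ⟨s, hs, hrs⟩ := h
  rwa [mul_left_cancel₀ hr hrs]

theorem IsLeftIdeal.mulImage_subset {I : Set R} (hI : IsLeftIdeal I) (b : R) :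
    mulImage b I ⊆ I := by
  rintro x ⟨i, hi, rfl⟩
  exact hI.2.2 i hi b

theorem IsRightIdeal.isRightIdeal_mulImage {I : Set R} (hI : IsRightIdeal I) (b : R) :
    IsRightIdeal (mulImage b I) := by
  obtain ⟨hI0, hIadd, hImul⟩ := hI
  refine ⟨⟨0, hI0, (mul_zero b).symm⟩, ?_, ?_⟩
  · rintro x ⟨i, hi, rfl⟩ y ⟨j, hj, rfl⟩
    exact ⟨i + j, hIadd i hi j hj, (mul_add b i j).symm⟩
  · rintro x ⟨i, hi, rfl⟩ r
    exact ⟨i * r, hImul i hi r, mul_assoc b i r⟩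

theorem IsRightIdeal.mulImage_add_subset {I : Set R} (hI : IsRightIdeal I) {a b : R}
    (hab : mulImage a I ⊆ mulImage b I) : mulImage (a + b) I ⊆ mulImage b I := by
  rintro x ⟨i, hi, rfl⟩
  obtain ⟨j, hj, hji⟩ := hab ⟨i, hi, rfl⟩
  exact ⟨j + i, hI.2.1 j hj i hi, by rw [add_mul, hji, mul_add]⟩

variable {I : Set R}

theorem mem_shrinkers_iff (hI : IsLeftIdeal I) {b : R} :
    b ∈ shrinkers I ↔ ¬ I ⊆ mulImage b I :=
  ⟨fun h => h.2, fun h => ⟨hI.mulImage_subset b, h⟩⟩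

theorem one_notMem_shrinkers : (1 : R) ∉ shrinkers I := by
  simp [shrinkers, mulImage_one]

theorem zero_mem_shrinkers (hI : IsLeftIdeal I) (hI0 : I ≠ {0}) : (0 : R) ∈ shrinkers I := by
  rw [mem_shrinkers_iff hI]
  intro h
  exact hI0 (Set.Subset.antisymm (h.trans (mulImage_zero_subset I))
    (Set.singleton_subset_iff.2 hI.1))

theorem add_mem_shrinkers
    (hR : ∀ S T : Set R, IsRightIdeal S → IsRightIdeal T → S ⊆ T ∨ T ⊆ S)
    (hIr : IsRightIdeal I) (hIl : IsLeftIdeal I) {a b : R}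
    (ha : a ∈ shrinkers I) (hb : b ∈ shrinkers I) : a + b ∈ shrinkers I := by
  rw [mem_shrinkers_iff hIl] at ha hb ⊢
  intro hab
  rcases hR _ _ (hIr.isRightIdeal_mulImage a) (hIr.isRightIdeal_mulImage b) with h | h
  · exact hb (hab.trans (hIr.mulImage_add_subset h))
  · rw [add_comm] at hab
    exact ha (hab.trans (hIr.mulImage_add_subset h))

theorem mul_mem_shrinkers_right (hI : IsLeftIdeal I) {a : R} (ha : a ∈ shrinkers I) (r : R) :
    a * r ∈ shrinkers I := by
  rw [mem_shrinkers_iff hI] at ha ⊢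
  rw [mulImage_mul]
  exact fun h => ha (h.trans (mulImage_mono a (hI.mulImage_subset r)))

theorem mul_mem_shrinkers_left [IsLeftCancelMulZero R] (hI : IsLeftIdeal I) (hI0 : I ≠ {0})
    {a : R} (ha : a ∈ shrinkers I) (r : R) : r * a ∈ shrinkers I := by
  rcases eq_or_ne r 0 with rfl | hr
  · simpa using zero_mem_shrinkers hI hI0
  rw [mem_shrinkers_iff hI] at ha ⊢
  rw [mulImage_mul]
  exact fun h => ha fun x hx => mem_of_mul_mem_mulImage hr (h (hI.2.2 x hx r))

theorem mem_or_mem_shrinkers_of_mul_mem (hI : IsLeftIdeal I) {x y : R}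
    (hxy : x * y ∈ shrinkers I) : x ∈ shrinkers I ∨ y ∈ shrinkers I := by
  simp only [mem_shrinkers_iff hI, mulImage_mul] at hxy ⊢
  by_contra! h
  exact hxy (h.1.trans (mulImage_mono x h.2))

theorem isRightIdeal_shrinkers
    (hR : ∀ S T : Set R, IsRightIdeal S → IsRightIdeal T → S ⊆ T ∨ T ⊆ S)
    (hIr : IsRightIdeal I) (hIl : IsLeftIdeal I) (hI0 : I ≠ {0}) :
    IsRightIdeal (shrinkers I) :=
  ⟨zero_mem_shrinkers hIl hI0, fun _ ha _ hb => add_mem_shrinkers hR hIr hIl ha hb,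
    fun _ ha r => mul_mem_shrinkers_right hIl ha r⟩

theorem isLeftIdeal_shrinkers [IsLeftCancelMulZero R]
    (hR : ∀ S T : Set R, IsRightIdeal S → IsRightIdeal T → S ⊆ T ∨ T ⊆ S)
    (hIr : IsRightIdeal I) (hIl : IsLeftIdeal I) (hI0 : I ≠ {0}) :
    IsLeftIdeal (shrinkers I) :=
  ⟨zero_mem_shrinkers hIl hI0, fun _ ha _ hb => add_mem_shrinkers hR hIr hIl ha hb,
    fun _ ha r => mul_mem_shrinkers_left hIl hI0 ha r⟩

end Shrinkers

/-- Let `R` be a uniserial domain and `I` a nonzero two-sided ideal of `R`.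
Then `P = {b ∈ R | bI ⊊ I}` is a completely prime two-sided ideal of `R`. -/
theorem shrinkers_isCompletelyPrime
    {R : Type*} [Ring R] [IsDomain R] (hR : IsUniserialRing R)
    (I : Set R) (hIr : IsRightIdeal I) (hIl : IsLeftIdeal I) (hI0 : I ≠ {0}) :
    IsRightIdeal {b : R | {x : R | ∃ i ∈ I, x = b * i} ⊂ I} ∧
    IsLeftIdeal {b : R | {x : R | ∃ i ∈ I, x = b * i} ⊂ I} ∧
    {b : R | {x : R | ∃ i ∈ I, x = b * i} ⊂ I} ≠ Set.univ ∧
    (∀ x y : R, {z : R | ∃ i ∈ I, z = (x * y) * i} ⊂ I →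
      {z : R | ∃ i ∈ I, z = x * i} ⊂ I ∨ {z : R | ∃ i ∈ I, z = y * i} ⊂ I) :=
  ⟨isRightIdeal_shrinkers hR.1 hIr hIl hI0, isLeftIdeal_shrinkers hR.1 hIr hIl hI0,
    fun h => one_notMem_shrinkers (h ▸ Set.mem_univ (1 : R)),
    fun _ _ => mem_or_mem_shrinkers_of_mul_mem hIl⟩
end

section
/- Let R be a rank one uniserial domain (a uniserial domain whose only non-zero completely prime two-sided ideal is the Jacobson radical J(R)). If a ∈ R is non-zero and aR is a two-sided ideal, then aR = Ra. -/
/-- A subset of a ring is a completely prime (two-sided, proper) ideal if it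
is a two-sided ideal, proper, and `x * y ∈ P` implies `x ∈ P` or `y ∈ P`. -/
def IsCompletelyPrimeIdeal {R : Type*} [Ring R] (P : Set R) : Prop :=
  IsRightIdeal P ∧ IsLeftIdeal P ∧ P ≠ Set.univ ∧
    ∀ x y : R, x * y ∈ P → x ∈ P ∨ y ∈ P

/-! If `aR` is two-sided then `x * a = a * σ x` for a ring endomorphism `σ`.
Left uniseriality compares `Ra` with `Rar`: either `ar ∈ Ra`, or `σ s * r = 1` for some `s`. In the
second case it suffices that `s` is a unit, since then `r = σ s⁻¹` and `a * r = s⁻¹ * a`.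
Right uniseriality makes `R` local, so the preimage under `σ` of the non-units is a completely prime
ideal. Unless `R` is a division ring it is nonzero: a non-unit `j` satisfies `a * j ∈ Ra`, i.e.
lies in the range of `σ`. By rank one it is `J(R)`, so `σ` reflects units. -/

section Ring

variable {R : Type*} [Ring R]

theorem isRightIdeal_setOf_eq_mul_left (c : R) : IsRightIdeal {x : R | ∃ r, x = c * r} := by
  refine ⟨⟨0, (mul_zero c).symm⟩, ?_, ?_⟩
  · rintro _ ⟨r, rfl⟩ _ ⟨r', rfl⟩
    exact ⟨r + r', (mul_add c r r').symm⟩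
  · rintro _ ⟨r, rfl⟩ t
    exact ⟨r * t, mul_assoc c r t⟩

theorem isLeftIdeal_setOf_eq_mul_right (c : R) : IsLeftIdeal {x : R | ∃ r, x = r * c} := by
  refine ⟨⟨0, (zero_mul c).symm⟩, ?_, ?_⟩
  · rintro _ ⟨r, rfl⟩ _ ⟨r', rfl⟩
    exact ⟨r + r', (add_mul r r' c).symm⟩
  · rintro _ ⟨r, rfl⟩ t
    exact ⟨t * r, (mul_assoc t r c).symm⟩

theorem IsUniserialRing.isLocalRing [Nontrivial R] [IsDedekindFiniteMonoid R]
    (hR : IsUniserialRing R) : IsLocalRing R := by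
  have add_mem {x y t : R} (hxy : x = y * t) (hy : y ∈ nonunits R) : x + y ∈ nonunits R := by
    rw [hxy, ← mul_add_one]
    exact fun h => hy (isUnit_of_mul_isUnit_left h)
  refine IsLocalRing.of_nonunits_add fun x y hx hy => ?_
  rcases hR.1 _ _ (isRightIdeal_setOf_eq_mul_left x) (isRightIdeal_setOf_eq_mul_left y) with h | h
  · obtain ⟨t, ht⟩ := h ⟨1, (mul_one x).symm⟩
    exact add_mem ht hy
  · obtain ⟨t, ht⟩ := h ⟨1, (mul_one y).symm⟩
    exact add_comm x y ▸ add_mem ht hx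

theorem isCompletelyPrimeIdeal_preimage_nonunits {S : Type*} [Ring S] [IsLocalRing S]
    [IsDedekindFiniteMonoid S] (f : R →+* S) : IsCompletelyPrimeIdeal (f ⁻¹' nonunits S) := by
  have zero_mem : (0 : R) ∈ f ⁻¹' nonunits S := by simp
  have add_mem : ∀ x ∈ f ⁻¹' nonunits S, ∀ y ∈ f ⁻¹' nonunits S, x + y ∈ f ⁻¹' nonunits S := by
    intro x hx y hy
    rw [Set.mem_preimage, map_add]
    exact IsLocalRing.nonunits_add hx hy
  refine ⟨⟨zero_mem, add_mem, ?_⟩, ⟨zero_mem, add_mem, ?_⟩, ?_, ?_⟩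
  · intro x hx r h
    exact hx (isUnit_of_mul_isUnit_left (map_mul f x r ▸ h))
  · intro x hx r h
    exact hx (isUnit_of_mul_isUnit_right (map_mul f r x ▸ h))
  · intro h
    have : (1 : R) ∈ f ⁻¹' nonunits S := h ▸ Set.mem_univ 1
    exact this (map_one f ▸ isUnit_one)
  · intro x y hxy
    by_contra! h
    exact hxy (map_mul f x y ▸ (not_not.1 h.1).mul (not_not.1 h.2))

theorem exists_mul_eq_mul_of_isUnit {a : R} (ha : IsUnit a) (r : R) : ∃ t, a * r = t * a := by
  obtain ⟨u, rfl⟩ := ha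
  exact ⟨u * r * ↑u⁻¹, by rw [mul_assoc _ _ (u : R), Units.inv_mul, mul_one]⟩

theorem IsLeftIdeal.exists_mul_eq_mul {a : R} (hL : IsLeftIdeal {x : R | ∃ r, x = a * r})
    (x : R) : ∃ y, x * a = a * y :=
  hL.2.2 a ⟨1, (mul_one a).symm⟩ x

end Ring

section Twist

variable {R : Type*} [Ring R] [IsDomain R] {a : R}

noncomputable def twistHom (ha : a ≠ 0) (hL : IsLeftIdeal {x : R | ∃ r, x = a * r}) :
    R →+* R where
  toFun x := (hL.exists_mul_eq_mul x).choose
  map_one' := mul_left_cancel₀ ha <| by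
    rw [← (hL.exists_mul_eq_mul 1).choose_spec, one_mul, mul_one]
  map_mul' x y := mul_left_cancel₀ ha <| by
    rw [← (hL.exists_mul_eq_mul (x * y)).choose_spec, ← mul_assoc a,
      ← (hL.exists_mul_eq_mul x).choose_spec, mul_assoc, mul_assoc x a,
      ← (hL.exists_mul_eq_mul y).choose_spec]
  map_zero' := mul_left_cancel₀ ha <| by
    rw [← (hL.exists_mul_eq_mul 0).choose_spec, zero_mul, mul_zero]
  map_add' x y := mul_left_cancel₀ ha <| by
    rw [← (hL.exists_mul_eq_mul (x + y)).choose_spec, mul_add,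
      ← (hL.exists_mul_eq_mul x).choose_spec, ← (hL.exists_mul_eq_mul y).choose_spec, add_mul]

theorem mul_eq_mul_twistHom (ha : a ≠ 0) (hL : IsLeftIdeal {x : R | ∃ r, x = a * r}) (x : R) :
    x * a = a * twistHom ha hL x :=
  (hL.exists_mul_eq_mul x).choose_spec

variable (ha : a ≠ 0) (hL : IsLeftIdeal {x : R | ∃ r, x = a * r})

theorem exists_mul_eq_mul_or_twistHom_mul_eq_one (hR : IsUniserialRing R) (r : R) :
    (∃ t, a * r = t * a) ∨ ∃ s, twistHom ha hL s * r = 1 := by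
  rcases hR.2 _ _ (isLeftIdeal_setOf_eq_mul_right a) (isLeftIdeal_setOf_eq_mul_right (a * r))
    with h | h
  · obtain ⟨s, hs⟩ := h ⟨1, (one_mul a).symm⟩
    refine Or.inr ⟨s, mul_left_cancel₀ ha ?_⟩
    rw [mul_one, ← mul_assoc, ← mul_eq_mul_twistHom, mul_assoc, ← hs]
  · exact Or.inl (h ⟨1, (one_mul (a * r)).symm⟩)

theorem exists_twistHom_eq_of_not_isUnit (hR : IsUniserialRing R) {j : R} (hj : ¬IsUnit j) :
    ∃ s, twistHom ha hL s = j := by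
  rcases exists_mul_eq_mul_or_twistHom_mul_eq_one ha hL hR j with ⟨s, hs⟩ | ⟨s, hs⟩
  · exact ⟨s, mul_left_cancel₀ ha (by rw [← mul_eq_mul_twistHom, hs])⟩
  · exact absurd (IsUnit.of_mul_eq_one_right _ hs) hj

theorem preimage_twistHom_nonunits (hR : IsUniserialRing R)
    (hrankone : ∀ P : Set R, IsCompletelyPrimeIdeal P → P ≠ {0} → P = {x : R | ¬ IsUnit x})
    {j : R} (hj0 : j ≠ 0) (hj : ¬IsUnit j) : twistHom ha hL ⁻¹' nonunits R = nonunits R := by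
  have := hR.isLocalRing
  refine hrankone _ (isCompletelyPrimeIdeal_preimage_nonunits _) fun h => ?_
  obtain ⟨s, rfl⟩ := exists_twistHom_eq_of_not_isUnit ha hL hR hj
  have hs : s ∈ twistHom ha hL ⁻¹' nonunits R := hj
  rw [h, Set.mem_singleton_iff] at hs
  subst hs
  exact hj0 (map_zero _)

theorem exists_mul_eq_mul_of_twistHom_mul_eq_one {r s : R} (hs : twistHom ha hL s * r = 1)
    (hu : IsUnit s) : ∃ t, a * r = t * a := by
  obtain ⟨u, rfl⟩ := hu
  have hr : twistHom ha hL ↑u⁻¹ = r :=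
    calc twistHom ha hL ↑u⁻¹ = twistHom ha hL ↑u⁻¹ * (twistHom ha hL u * r) := by rw [hs, mul_one]
      _ = r := by rw [← mul_assoc, ← map_mul, Units.inv_mul, map_one, one_mul]
  exact ⟨↑u⁻¹, by rw [← hr, ← mul_eq_mul_twistHom]⟩

end Twist

/-- Let `R` be a rank one uniserial domain, i.e. a uniserial domain whose only
nonzero completely prime two-sided ideal is `J(R)` (the set of non-units).
If `a ≠ 0` and the principal right ideal `aR` is a two-sided ideal, then
`aR = Ra`. -/
theorem principal_twoSided_ideal_eq
    {R : Type*} [Ring R] [IsDomain R] (hR : IsUniserialRing R)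
    (hrankone : ∀ P : Set R, IsCompletelyPrimeIdeal P → P ≠ {0} →
      P = {x : R | ¬ IsUnit x})
    (a : R) (ha : a ≠ 0)
    (htwosided : IsLeftIdeal {x : R | ∃ r : R, x = a * r}) :
    {x : R | ∃ r : R, x = a * r} = {x : R | ∃ r : R, x = r * a} := by
  refine Set.Subset.antisymm ?_ ?_
  · rintro _ ⟨r, rfl⟩
    by_cases hdiv : ∃ j : R, j ≠ 0 ∧ ¬IsUnit j
    · obtain ⟨j, hj0, hj⟩ := hdiv
      rcases exists_mul_eq_mul_or_twistHom_mul_eq_one ha htwosided hR r with h | ⟨s, hs⟩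
      · exact h
      have hsu : IsUnit s := by
        by_contra hsn
        rw [← mem_nonunits_iff, ← preimage_twistHom_nonunits ha htwosided hR hrankone hj0 hj] at hsn
        exact hsn (IsUnit.of_mul_eq_one _ hs)
      exact exists_mul_eq_mul_of_twistHom_mul_eq_one ha htwosided hs hsu
    · push Not at hdiv
      exact exists_mul_eq_mul_of_isUnit (hdiv a ha) r
  · rintro _ ⟨r, rfl⟩
    exact ⟨twistHom ha htwosided r, mul_eq_mul_twistHom ha htwosided r⟩
end

section
/- Let Γ be a dense additive subgroup of ℝ, let α, β ∈ Γ with α, β ≥ 0, let γ, δ ∈ Γ with γ, δ > 0, and let ε₁, ε₂ ∈ Γ. Then there exists μ ∈ Γ with α ≤ ε₁ + μ < α + γ and β ≤ ε₂ − μ < β + δ if and only if α + β ≤ ε₁ + ε₂ < (α + γ) + (β + δ). -/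
open Set

/-- The witness is `a` itself when `a = d`, otherwise a point of `s` in `(max a c, min b d)`. -/
theorem Dense.exists_mem_Ico_inter_Ioc {α : Type*} [TopologicalSpace α] [LinearOrder α]
    [OrderTopology α] [DenselyOrdered α] {s : Set α} (hs : Dense s) {a b c d : α}
    (ha : a ∈ s) (hab : a < b) (hcd : c < d) (had : a ≤ d) (hcb : c < b) :
    ∃ μ ∈ s, μ ∈ Ico a b ∩ Ioc c d := by
  rcases had.eq_or_lt with rfl | had
  · exact ⟨a, ha, ⟨le_rfl, hab⟩, hcd, le_rfl⟩
  · have hne : max a c < min b d := max_lt (lt_min hab had) (lt_min hcb hcd)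
    obtain ⟨μ, hμs, hμ⟩ := hs.exists_between hne
    rw [mem_Ioo, max_lt_iff, lt_min_iff] at hμ
    exact ⟨μ, hμs, ⟨hμ.1.1.le, hμ.2.1⟩, hμ.1.2, hμ.2.2.le⟩

theorem dense_subgroup_shift_iff_general
    (Γ : AddSubgroup ℝ) (hΓ : Dense (Γ : Set ℝ))
    (α β γ δ ε₁ ε₂ : ℝ)
    (hα : α ∈ Γ)
    (hε₁ : ε₁ ∈ Γ)
    (hγ0 : 0 < γ) (hδ0 : 0 < δ) :
    (∃ μ ∈ Γ, (α ≤ ε₁ + μ ∧ ε₁ + μ < α + γ) ∧ (β ≤ ε₂ - μ ∧ ε₂ - μ < β + δ)) ↔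
      (α + β ≤ ε₁ + ε₂ ∧ ε₁ + ε₂ < (α + γ) + (β + δ)) := by
  constructor
  · rintro ⟨μ, -, ⟨h₁, h₂⟩, h₃, h₄⟩
    constructor <;> linarith
  · rintro ⟨hle, hlt⟩
    obtain ⟨μ, hμΓ, ⟨h₁, h₂⟩, h₃, h₄⟩ :=
      hΓ.exists_mem_Ico_inter_Ioc (a := α - ε₁) (b := α + γ - ε₁) (c := ε₂ - β - δ)
        (d := ε₂ - β) (sub_mem hα hε₁) (by linarith) (by linarith) (by linarith) (by linarith)
    exact ⟨μ, hμΓ, ⟨by linarith, by linarith⟩, by linarith, by linarith⟩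

/-- Let `Γ` be a dense additive subgroup of `ℝ`, `α, β ∈ Γ` nonnegative,
`γ, δ ∈ Γ` positive, and `ε₁, ε₂ ∈ Γ`. Then there exists `μ ∈ Γ` with
`α ≤ ε₁ + μ < α + γ` and `β ≤ ε₂ - μ < β + δ` if and only if
`α + β ≤ ε₁ + ε₂ < (α + γ) + (β + δ)`. -/
theorem dense_subgroup_shift_iff
    (Γ : AddSubgroup ℝ) (hΓ : Dense (Γ : Set ℝ))
    (α β γ δ ε₁ ε₂ : ℝ)
    (hα : α ∈ Γ) (hβ : β ∈ Γ) (hγ : γ ∈ Γ) (hδ : δ ∈ Γ)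
    (hε₁ : ε₁ ∈ Γ) (hε₂ : ε₂ ∈ Γ)
    (hα0 : 0 ≤ α) (hβ0 : 0 ≤ β) (hγ0 : 0 < γ) (hδ0 : 0 < δ) :
    (∃ μ ∈ Γ, (α ≤ ε₁ + μ ∧ ε₁ + μ < α + γ) ∧ (β ≤ ε₂ - μ ∧ ε₂ - μ < β + δ)) ↔
      (α + β ≤ ε₁ + ε₂ ∧ ε₁ + ε₂ < (α + γ) + (β + δ)) :=
  dense_subgroup_shift_iff_general Γ hΓ α β γ δ ε₁ ε₂ hα hε₁ hγ0 hδ0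
end

section
/- Let Γ be a dense additive subgroup of ℝ, let α, β ∈ Γ with α, β ≥ 0, let γ, δ ∈ Γ with γ, δ > 0, let q ∈ Γ and ε ∈ ℝ \ Γ. Then there exists μ ∈ Γ with α ≤ ε + μ < α + γ and β ≤ q − μ < β + δ if and only if α + β < ε + q < (α + γ) + (β + δ). -/
/-! Because `ε ∉ Γ`, the shifted point `ε + μ` is never equal to `α`, so the closed left endpoint
of the first constraint is never attained. The conditions on `μ` therefore say that `μ` lies in the
intersection of the open intervals `(α - ε, α + γ - ε)` and `(q - β - δ, q - β)`. This intersection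
is nonempty exactly when `α + β < ε + q < (α + γ) + (β + δ)`, and then it contains a point of `Γ`
since `Γ` is dense. -/

open Set

theorem Dense.exists_mem_Ioo_inter_Ioo {X : Type*} [TopologicalSpace X] [LinearOrder X]
    [OrderClosedTopology X] [DenselyOrdered X] {s : Set X} (hs : Dense s) {a b c d : X}
    (hab : a < b) (had : a < d) (hcb : c < b) (hcd : c < d) :
    ∃ x ∈ s, x ∈ Ioo a b ∧ x ∈ Ioo c d := by
  obtain ⟨x, hxs, hx⟩ := hs.exists_between (max_lt (lt_min hab had) (lt_min hcb hcd))
  rw [← Ioo_inter_Ioo] at hx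
  exact ⟨x, hxs, hx⟩

theorem AddSubgroup.lt_add_of_le_of_notMem {G : Type*} [AddGroup G] [PartialOrder G]
    {H : AddSubgroup G} {a x μ : G} (ha : a ∈ H) (hμ : μ ∈ H) (hx : x ∉ H) (h : a ≤ x + μ) :
    a < x + μ :=
  h.lt_of_ne fun e => hx ((H.add_mem_cancel_right hμ).mp (e ▸ ha))

theorem dense_subgroup_shift_iff_irrational_one_general
    (Γ : AddSubgroup ℝ) (hΓ : Dense (Γ : Set ℝ))
    (α β γ δ q ε : ℝ)
    (hα : α ∈ Γ)
    (hε : ε ∉ Γ)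
    (hγ0 : 0 < γ) (hδ0 : 0 < δ) :
    (∃ μ ∈ Γ, (α ≤ ε + μ ∧ ε + μ < α + γ) ∧ (β ≤ q - μ ∧ q - μ < β + δ)) ↔
      (α + β < ε + q ∧ ε + q < (α + γ) + (β + δ)) := by
  constructor
  · rintro ⟨μ, hμ, ⟨hlow, hup⟩, ⟨hlow', hup'⟩⟩
    have hstrict := AddSubgroup.lt_add_of_le_of_notMem hα hμ hε hlow
    constructor <;> linarith
  · rintro ⟨hlow, hup⟩
    obtain ⟨μ, hμ, ⟨h₁, h₂⟩, ⟨h₃, h₄⟩⟩ := hΓ.exists_mem_Ioo_inter_Ioo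
      (a := α - ε) (b := α + γ - ε) (c := q - β - δ) (d := q - β)
      (by linarith) (by linarith) (by linarith) (by linarith)
    exact ⟨μ, hμ, ⟨by linarith, by linarith⟩, ⟨by linarith, by linarith⟩⟩

/-- Let `Γ` be a dense additive subgroup of `ℝ`, `α, β ∈ Γ` nonnegative,
`γ, δ ∈ Γ` positive, `q ∈ Γ`, and `ε ∈ ℝ \ Γ`. Then there exists `μ ∈ Γ` with
`α ≤ ε + μ < α + γ` and `β ≤ q - μ < β + δ` if and only if
`α + β < ε + q < (α + γ) + (β + δ)`. -/
theorem dense_subgroup_shift_iff_irrational_one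
    (Γ : AddSubgroup ℝ) (hΓ : Dense (Γ : Set ℝ))
    (α β γ δ q ε : ℝ)
    (hα : α ∈ Γ) (hβ : β ∈ Γ) (hγ : γ ∈ Γ) (hδ : δ ∈ Γ)
    (hq : q ∈ Γ) (hε : ε ∉ Γ)
    (hα0 : 0 ≤ α) (hβ0 : 0 ≤ β) (hγ0 : 0 < γ) (hδ0 : 0 < δ) :
    (∃ μ ∈ Γ, (α ≤ ε + μ ∧ ε + μ < α + γ) ∧ (β ≤ q - μ ∧ q - μ < β + δ)) ↔
      (α + β < ε + q ∧ ε + q < (α + γ) + (β + δ)) :=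
  dense_subgroup_shift_iff_irrational_one_general Γ hΓ α β γ δ q ε hα hε hγ0 hδ0
end

section
/- Let R be a uniserial domain with Jacobson radical J satisfying J² = J, let w ∈ R satisfy wR = Rw, and suppose a, b ∈ R with ab = w. If α ∉ Ra, β ∉ bR and αβ ∈ RabR = wR, then a contradiction follows; i.e. for all α, β ∈ R with α ∉ Ra and β ∉ bR, we have αβ ∉ wR. (Key computation: writing a = rα and b = βs with r, s ∈ J, from αβ = wλ one derives w = rw μ for some μ ∈ R, contradicting r ∈ J.) -/
section

variable {R : Type*} [Ring R]

lemma isLeftIdeal_principal (a : R) : IsLeftIdeal {x : R | ∃ c : R, x = c * a} :=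
  ⟨⟨0, (zero_mul a).symm⟩,
   fun _ ⟨c, hc⟩ _ ⟨d, hd⟩ => ⟨c + d, by rw [hc, hd, add_mul]⟩,
   fun _ ⟨c, hc⟩ r => ⟨r * c, by rw [hc, mul_assoc]⟩⟩

lemma isRightIdeal_principal (a : R) : IsRightIdeal {x : R | ∃ c : R, x = a * c} :=
  ⟨⟨0, (mul_zero a).symm⟩,
   fun _ ⟨c, hc⟩ _ ⟨d, hd⟩ => ⟨c + d, by rw [hc, hd, mul_add]⟩,
   fun _ ⟨c, hc⟩ r => ⟨c * r, by rw [hc, mul_assoc]⟩⟩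

namespace IsUniserialRing

lemma exists_eq_mul_of_not_exists_eq_mul (hR : IsUniserialRing R) {a α : R}
    (h : ¬ ∃ r : R, α = r * a) : ∃ r : R, a = r * α := by
  rcases hR.2 _ _ (isLeftIdeal_principal a) (isLeftIdeal_principal α) with hsub | hsub
  · exact hsub ⟨1, (one_mul a).symm⟩
  · exact absurd (hsub ⟨1, (one_mul α).symm⟩) h

lemma dvd_of_not_dvd (hR : IsUniserialRing R) {b β : R} (h : ¬ b ∣ β) : β ∣ b := by
  rcases hR.1 _ _ (isRightIdeal_principal b) (isRightIdeal_principal β) with hsub | hsub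
  · exact hsub ⟨1, (mul_one b).symm⟩
  · exact absurd (hsub ⟨1, (mul_one β).symm⟩) h

end IsUniserialRing

lemma isUnit_of_eq_mul_mul [NoZeroDivisors R] {w r m : R} (hw : w ≠ 0)
    (hnormal : ∃ t : R, w * m = t * w) (h : w = r * (w * m)) : IsUnit r := by
  obtain ⟨t, ht⟩ := hnormal
  refine IsUnit.of_mul_eq_one t (mul_right_cancel₀ hw ?_)
  rw [mul_assoc, ← ht, ← h, one_mul]

end

theorem consistency_of_pair_general
    {R : Type*} [Ring R] [IsDomain R] (hR : IsUniserialRing R)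
    (w a b : R)
    (hw : {x : R | ∃ r : R, x = w * r} = {x : R | ∃ r : R, x = r * w})
    (hab : a * b = w) :
    ∀ α β : R, (¬ ∃ r : R, α = r * a) → (¬ ∃ r : R, β = b * r) →
      ¬ ∃ r : R, α * β = w * r := by
  rintro α β hα hβ ⟨l, hl⟩
  have hw0 : w ≠ 0 := by
    rintro rfl
    rcases mul_eq_zero.mp (hl.trans (zero_mul l)) with h | h
    · exact hα ⟨0, by rw [h, zero_mul]⟩
    · exact hβ ⟨0, by rw [h, mul_zero]⟩
  obtain ⟨r, rfl⟩ := hR.exists_eq_mul_of_not_exists_eq_mul hα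
  obtain ⟨s, rfl⟩ := hR.dvd_of_not_dvd hβ
  have hw_eq : w = r * (w * (l * s)) := by
    rw [← mul_assoc w, ← hl, ← hab]
    noncomm_ring
  have hnormal : ∃ t : R, w * (l * s) = t * w := by
    have hmem : w * (l * s) ∈ {x : R | ∃ r : R, x = w * r} := ⟨l * s, rfl⟩
    rwa [hw] at hmem
  obtain ⟨u, rfl⟩ := isUnit_of_eq_mul_mul hw0 hnormal hw_eq
  exact hα ⟨↑u⁻¹, by rw [← mul_assoc, Units.inv_mul, one_mul]⟩

/-- Let `R` be a uniserial domain whose Jacobson radical `J` (the set of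
non-units) satisfies `J² = J`, let `w ∈ R` satisfy `wR = Rw`, and let
`a, b ∈ R` with `a * b = w`. Then for all `α, β ∈ R` with `α ∉ Ra` and
`β ∉ bR`, we have `α * β ∉ wR`. -/
theorem consistency_of_pair
    {R : Type*} [Ring R] [IsDomain R] (hR : IsUniserialRing R)
    (hJ2 : {x : R | ∃ c d : R, ¬ IsUnit c ∧ ¬ IsUnit d ∧ x = c * d} =
      {x : R | ¬ IsUnit x})
    (w a b : R)
    (hw : {x : R | ∃ r : R, x = w * r} = {x : R | ∃ r : R, x = r * w})
    (hab : a * b = w) :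
    ∀ α β : R, (¬ ∃ r : R, α = r * a) → (¬ ∃ r : R, β = b * r) →
      ¬ ∃ r : R, α * β = w * r :=
  consistency_of_pair_general hR w a b hw hab
end
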